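/- The quotient ring ℤ[X]/(X² − 2X, X + 2, 2X) is isomorphic, as a ring, to ℤ/4ℤ, via the isomorphism sending the class of X to 2 (equivalently, to −2) in ℤ/4ℤ. -/

import Mathlib

/-!
Modulo `X + 2` the generators `X² - 2X` and `2X` become `8` and `-4`, so the ideal is
`(4, X + 2)`, and evaluation at `X = -2` identifies the quotient with `ℤ/4`. Under any such
isomorphism `X` goes to `-2`, which is `2` in `ℤ/4`.
-/

open Polynomial

noncomputable section

/-- The quotient of the Burnside ring `A(C₂) = ℤ[X]/(X² - 2X)` by the Tambara ideal
generated by `2 ∈ A(C₂/e)`, i.e. `ℤ[X]/(X² - 2X, X + 2, 2X)`. -/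
def relQ : Ideal (Polynomial ℤ) :=
  Ideal.span {(X : Polynomial ℤ) ^ 2 - 2 * X, X + 2, 2 * X}

def Polynomial.quotientSpanCXSubCEquivZMod (n : ℕ) (a : ℤ) :
    ℤ[X] ⧸ Ideal.span {C (n : ℤ), X - C a} ≃+* ZMod n :=
  (quotientSpanCXSubCAlgEquiv (n : ℤ) a).toRingEquiv.trans (Int.quotientSpanNatEquivZMod n)

theorem Polynomial.quotient_mk_X_eq_of_X_sub_C_mem {R : Type*} [CommRing R] {I : Ideal R[X]}
    {a : R} (h : X - C a ∈ I) : Ideal.Quotient.mk I X = Ideal.Quotient.mk I (C a) :=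
  Ideal.Quotient.eq.mpr h

theorem X_sub_C_neg_two_mem_relQ : X - C (-2) ∈ relQ :=
  Ideal.subset_span (by simp)

theorem relQ_eq_span : relQ = Ideal.span {C ((4 : ℕ) : ℤ), X - C (-2)} := by
  apply le_antisymm <;>
    simp only [relQ, Ideal.span_le, Set.insert_subset_iff, Set.singleton_subset_iff,
      SetLike.mem_coe]
  · refine ⟨Ideal.mem_span_pair.mpr ⟨2, X - 4, ?_⟩, Ideal.mem_span_pair.mpr ⟨0, 1, ?_⟩,
      Ideal.mem_span_pair.mpr ⟨-1, 2, ?_⟩⟩ <;> simp <;> ring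
  · have h2X : 2 * X ∈ relQ := Ideal.subset_span (by simp)
    have h4 : C ((4 : ℕ) : ℤ) = 2 * (X - C (-2)) - 2 * X := by simp; ring
    exact ⟨h4 ▸ sub_mem (Ideal.mul_mem_left _ _ X_sub_C_neg_two_mem_relQ) h2X,
      X_sub_C_neg_two_mem_relQ⟩

/-- `ℤ[X]/(X² - 2X, X + 2, 2X)` is isomorphic to `ℤ/4ℤ` via `X ↦ 2` (equivalently,
`X ↦ -2`). -/
theorem stmt12 :
    ∃ e : (Polynomial ℤ ⧸ relQ) ≃+* ZMod 4,
      e (Ideal.Quotient.mk relQ X) = 2 ∧ e (Ideal.Quotient.mk relQ X) = -2 := by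
  let e := (Ideal.quotEquivOfEq relQ_eq_span).trans (quotientSpanCXSubCEquivZMod 4 (-2))
  have hX : e (Ideal.Quotient.mk relQ X) = -2 := by
    rw [quotient_mk_X_eq_of_X_sub_C_mem X_sub_C_neg_two_mem_relQ]
    exact (map_intCast ((e : _ →+* ZMod 4).comp ((Ideal.Quotient.mk relQ).comp C)) (-2)).trans
      (by norm_num)
  exact ⟨e, hX.trans (by decide), hX⟩
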